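/- Let τ be a Borel probability measure on [0,∞], let t ∈ ℝ∖{0}, let d ∈ ℕ, and define f : (ℝ≥0)^d ∖ {0} → ℝ by f(x) = ‖x‖₁ · exp₂( t·∫_{[0,∞]} H_α(x/‖x‖₁) dτ(α) ), where ‖x‖₁ = ∑_i x_i. Then: (1) f is concave whenever t > 0, supp(τ) ⊆ [0,1], τ({1}) = 0, and ∫_{[0,1)} α/(1−α) dτ(α) ≤ 1/t; (2) f is convex whenever t < 0 and either (a) supp(τ) ⊆ [0,1], or (b) there exists α* ∈ (1,∞] with supp(τ) ⊆ [0,1] ∪ {α*}, τ({1}) = 0, and ∫_{[0,∞]} α/(1−α) dτ(α) ≤ 1/t, with the convention that α/(1−α) = −1 at α = ∞. -/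

import Mathlib

open MeasureTheory
open scoped ENNReal

noncomputable section

/-- Base-2 logarithm. -/
def log2 (x : ℝ) : ℝ := Real.logb 2 x

/-- Base-2 exponential. -/
def exp2 (x : ℝ) : ℝ := (2 : ℝ) ^ x

/-- Rényi entropy of order `α ∈ [0,∞]` of a vector `p` on a finite set. -/
def renyi {X : Type*} [Fintype X] (α : ℝ≥0∞) (p : X → ℝ) : ℝ :=
  if α = 0 then log2 (Nat.card {x : X // 0 < p x})
  else if α = 1 then -∑ x, p x * log2 (p x)
  else if α = ⊤ then -log2 (⨆ x, p x)
  else (1 - α.toReal)⁻¹ * log2 (∑ x, p x ^ α.toReal)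

/-- A probability vector on a finite set. -/
def IsProbVec {X : Type*} [Fintype X] (p : X → ℝ) : Prop :=
  (∀ x, 0 ≤ p x) ∧ ∑ x, p x = 1

/-- A doubly stochastic matrix. -/
def DoublyStochastic {X : Type*} [Fintype X] (S : Matrix X X ℝ) : Prop :=
  (∀ i j, 0 ≤ S i j) ∧ (∀ i, ∑ j, S i j = 1) ∧ (∀ j, ∑ i, S i j = 1)

/-- `Q` is obtained from `P` by a conditionally mixing channel. -/
def CondMixed {X Y Y' : Type*} [Fintype X] [Fintype Y] [Fintype Y']
    (P : Matrix X Y ℝ) (Q : Matrix X Y' ℝ) : Prop :=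
  ∃ (k : ℕ) (S : Fin k → Matrix X X ℝ) (D : Fin k → Matrix Y Y' ℝ),
    (∀ i, DoublyStochastic (S i)) ∧
    (∀ i a b, 0 ≤ D i a b) ∧
    (∀ a, ∑ b, ∑ i, D i a b = 1) ∧
    Q = ∑ i, S i * P * D i

/-- A joint probability distribution on finite alphabets, viewed as a matrix. -/
def IsJointProb {X Y : Type*} [Fintype X] [Fintype Y] (P : Matrix X Y ℝ) : Prop :=
  (∀ x y, 0 ≤ P x y) ∧ ∑ x, ∑ y, P x y = 1

/-- Marginal on the conditioning system: the `y`-th column sum. -/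
def margY {X Y : Type*} [Fintype X] (P : Matrix X Y ℝ) (y : Y) : ℝ := ∑ x, P x y

/-- The conditioned distribution (normalized `y`-th column). -/
def condX {X Y : Type*} [Fintype X] (P : Matrix X Y ℝ) (y : Y) : X → ℝ :=
  fun x => P x y / margY P y

/-- The conditional entropy `H_{t,τ}`. -/
def Hbulk {X Y : Type*} [Fintype X] [Fintype Y] (t : ℝ) (τ : Measure ℝ≥0∞)
    (P : Matrix X Y ℝ) : ℝ :=
  t⁻¹ * log2 (∑ y ∈ Finset.univ.filter (fun y => 0 < margY P y),
    margY P y * exp2 (t * ∫ α, renyi α (condX P y) ∂τ))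

/-- The conditional entropy `H_{0,α}`. -/
def HzeroA {X Y : Type*} [Fintype X] [Fintype Y] (α : ℝ≥0∞) (P : Matrix X Y ℝ) : ℝ :=
  ∑ y ∈ Finset.univ.filter (fun y => 0 < margY P y), margY P y * renyi α (condX P y)

/-- The conditional entropy `H_{-∞,τ}`. -/
def HnegInf {X Y : Type*} [Fintype X] [Fintype Y] (τ : Measure ℝ≥0∞)
    (P : Matrix X Y ℝ) : ℝ :=
  sInf ((fun y => ∫ α, renyi α (condX P y) ∂τ) '' {y | 0 < margY P y})

/-- The conditional entropy `H_{+∞,0}`. -/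
def HposInf {X Y : Type*} [Fintype X] [Fintype Y] (P : Matrix X Y ℝ) : ℝ :=
  sSup ((fun y => renyi 0 (condX P y)) '' {y | 0 < margY P y})

/-- The parameter set `𝒟_bulk`. -/
def Dbulk : Set (ℝ × Measure ℝ≥0∞) :=
  {p | p.1 ≠ 0 ∧ IsProbabilityMeasure p.2 ∧
    ∀ (d n n' : ℕ) (P : Matrix (Fin d) (Fin n) ℝ) (Q : Matrix (Fin d) (Fin n') ℝ),
      IsJointProb P → CondMixed P Q → Hbulk p.1 p.2 P ≤ Hbulk p.1 p.2 Q}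

/-- The parameter set `𝒟_{-∞}`. -/
def DnegInf : Set (Measure ℝ≥0∞) :=
  {τ | IsProbabilityMeasure τ ∧
    ∀ (d n n' : ℕ) (P : Matrix (Fin d) (Fin n) ℝ) (Q : Matrix (Fin d) (Fin n') ℝ),
      IsJointProb P → CondMixed P Q → HnegInf τ P ≤ HnegInf τ Q}

/-- `P'` is obtained from `P` by relabeling (injections) and embedding, with zeros elsewhere. -/
def Embeds {X Y X' Y' : Type*} [Fintype X] [Fintype Y] [Fintype X'] [Fintype Y']
    (P : Matrix X Y ℝ) (P' : Matrix X' Y' ℝ) : Prop :=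
  ∃ (f : X ↪ X') (g : Y ↪ Y'),
    (∀ x y, P' (f x) (g y) = P x y) ∧
    (∀ x' y', P' x' y' ≠ 0 → (∃ x, f x = x') ∧ (∃ y, g y = y'))

/-- Conditional majorization: after a common embedding, a conditionally mixing channel maps
(the embedding of) `P` to (the embedding of) `Q`. -/
def CondMajorizes {X Y X' Y' : Type*} [Fintype X] [Fintype Y] [Fintype X'] [Fintype Y']
    (P : Matrix X Y ℝ) (Q : Matrix X' Y' ℝ) : Prop :=
  ∃ (m n n' : ℕ) (P' : Matrix (Fin m) (Fin n) ℝ) (Q' : Matrix (Fin m) (Fin n') ℝ),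
    Embeds P P' ∧ Embeds Q Q' ∧ CondMixed P' Q'

/-- Kronecker product of matrices. -/
def kron {X Y X' Y' : Type*} (P : Matrix X Y ℝ) (Q : Matrix X' Y' ℝ) :
    Matrix (X × X') (Y × Y') ℝ :=
  Matrix.of fun x y => P x.1 y.1 * Q x.2 y.2

/-- `n`-fold Kronecker power of a matrix. -/
def kronPow {X Y : Type*} (P : Matrix X Y ℝ) (n : ℕ) :
    Matrix (Fin n → X) (Fin n → Y) ℝ :=
  Matrix.of fun x y => ∏ i, P (x i) (y i)

/-- Sum of all entries of a matrix. -/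
def totalMass {X Y : Type*} [Fintype X] [Fintype Y] (P : Matrix X Y ℝ) : ℝ :=
  ∑ x, ∑ y, P x y

/-- `α/(1-α)`, with the convention that it equals `-1` at `α = ∞`. -/
def aRatio (α : ℝ≥0∞) : ℝ := if α = ⊤ then -1 else α.toReal / (1 - α.toReal)

/-- `α/(α-1)`, with the convention that it equals `1` at `α = ∞`. -/
def aRatio' (α : ℝ≥0∞) : ℝ := if α = ⊤ then 1 else α.toReal / (α.toReal - 1)

/-- Rényi relative entropy `D_α(p‖r)`. -/
def relRenyi {X : Type*} [Fintype X] (α : ℝ≥0∞) (p r : X → ℝ) : ℝ :=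
  if α = 1 then ∑ x, p x * log2 (p x / r x)
  else if α = ⊤ then log2 (⨆ x, p x / r x)
  else (α.toReal - 1)⁻¹ * log2 (∑ x, p x ^ α.toReal * r x ^ (1 - α.toReal))

/-- The quantity `I_{t,τ}(P‖R)`. -/
def Ibulk {X Y : Type*} [Fintype X] [Fintype Y] (t : ℝ) (τ : Measure ℝ≥0∞)
    (P : Matrix X Y ℝ) (R : X → ℝ) : ℝ :=
  -t⁻¹ * log2 (∑ y ∈ Finset.univ.filter (fun y => 0 < margY P y),
    margY P y * exp2 (-t * ∫ α, relRenyi α (condX P y) R ∂τ))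

/-- The quantity `I_{-∞,τ}(P‖R)`. -/
def InegInf {X Y : Type*} [Fintype X] [Fintype Y] (τ : Measure ℝ≥0∞)
    (P : Matrix X Y ℝ) (R : X → ℝ) : ℝ :=
  sSup ((fun y => ∫ α, relRenyi α (condX P y) R ∂τ) '' {y | 0 < margY P y})

/-- A conditioned `R`-preserving channel maps `P` to `Q`. -/
def CondPreserving {X Y Y' : Type*} [Fintype X] [Fintype Y] [Fintype Y'] (R : X → ℝ)
    (P : Matrix X Y ℝ) (Q : Matrix X Y' ℝ) : Prop :=
  ∃ (k : ℕ) (G : Fin k → Matrix X X ℝ) (D : Fin k → Matrix Y Y' ℝ),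
    (∀ i a b, 0 ≤ G i a b) ∧
    (∀ i b, ∑ a, G i a b = 1) ∧
    (∀ i, (G i).mulVec R = R) ∧
    (∀ i a b, 0 ≤ D i a b) ∧
    (∀ a, ∑ b, ∑ i, D i a b = 1) ∧
    Q = ∑ i, G i * P * D i

/-- Total variation distance between two matrices. -/
def tvDist {X Y : Type*} [Fintype X] [Fintype Y] (P Q : Matrix X Y ℝ) : ℝ :=
  (1 / 2) * ∑ x, ∑ y, |P x y - Q x y|

/-!
The function `x ↦ ‖x‖₁ · 2^(t ∫ H_α(x/‖x‖₁) dτ)` is the perspective of `g = 2^(t ∫ H_α dτ)` on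
the simplex, so it is positively homogeneous and its concavity (convexity) on the punctured
orthant amounts to superadditivity (subadditivity).

In case (2a) every `H_α` with `α ≤ 1` is concave, so `g` is convex for `t < 0`, and so is its
perspective.

Otherwise, for `α ∉ {0, 1}` one has `H_α(x/‖x‖₁) = α/(1-α) · log(‖x‖_α / ‖x‖₁)`, while `H_0` is
monotone in the support. Comparing `v ∈ {x, y}` with `z = x + y`, this relates
`‖v‖₁ 2^(t ∫ H_α(v/‖v‖₁) dτ)` to `‖z‖₁ 2^(t ∫ H_α(z/‖z‖₁) dτ)` times a weighted geometric mean of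
`‖v‖₁/‖z‖₁` and of the ratios `‖v‖_α/‖z‖_α`, with weights `1 - t ∫ α/(1-α) dτ` and
`t α/(1-α) dτ(α)` of total mass one. The hypotheses make all weights nonnegative in case (1), and
all nonpositive except an atom at `α*` in case (2b); Jensen's inequality, respectively its
reverse, then compares the geometric with the arithmetic mean. Summed over `v = x, y`, the
arithmetic means add up to at most (at least) one by the reverse Minkowski inequality for `α < 1`
and Minkowski's inequality for `α > 1`.
-/

open Set

lemma exp2_pos (x : ℝ) : 0 < exp2 x := Real.rpow_pos_of_pos two_pos x

lemma exp2_add (x y : ℝ) : exp2 (x + y) = exp2 x * exp2 y := Real.rpow_add two_pos x y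

lemma exp2_neg (x : ℝ) : exp2 (-x) = (exp2 x)⁻¹ := Real.rpow_neg zero_le_two x

lemma exp2_log2 {x : ℝ} (hx : 0 < x) : exp2 (log2 x) = x :=
  Real.rpow_logb two_pos (by norm_num) hx

lemma exp2_le_exp2 {x y : ℝ} : exp2 x ≤ exp2 y ↔ x ≤ y :=
  Real.rpow_le_rpow_left_iff one_lt_two

lemma log2_eq_log_div (x : ℝ) : log2 x = Real.log x / Real.log 2 := Real.log_div_log.symm

@[fun_prop]
lemma measurable_log2 : Measurable log2 := by
  rw [funext log2_eq_log_div]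
  fun_prop

lemma convexOn_exp2 : ConvexOn ℝ univ exp2 := convexOn_rpow_left two_pos

lemma exp2_mul_one_add_le (b u : ℝ) : exp2 b * (1 + (u - b) * Real.log 2) ≤ exp2 u := by
  have h : exp2 u = exp2 b * Real.exp ((u - b) * Real.log 2) := by
    rw [mul_comm (u - b), ← Real.rpow_def_of_pos two_pos, ← exp2, ← exp2_add, add_sub_cancel]
  rw [h]
  gcongr
  · exact (exp2_pos b).le
  · linarith [Real.add_one_le_exp ((u - b) * Real.log 2)]

section WeightedJensen

variable {β : Type*} [MeasurableSpace β] {μ : Measure β} {w u : β → ℝ} {W a : ℝ}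

lemma add_integral_mul_affine (hw : Integrable w μ) (hwu : Integrable (fun x => w x * u x) μ)
    (hsum : W + ∫ x, w x ∂μ = 1) {ℓ : ℝ → ℝ} (hℓ : ∃ k m, ∀ v, ℓ v = k + m * v) :
    W * ℓ a + ∫ x, w x * ℓ (u x) ∂μ = ℓ (W * a + ∫ x, w x * u x ∂μ) := by
  obtain ⟨k, m, hℓ⟩ := hℓ
  have h : ∫ x, w x * ℓ (u x) ∂μ = k * ∫ x, w x ∂μ + m * ∫ x, w x * u x ∂μ := by
    simp_rw [hℓ, mul_add, ← integral_const_mul]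
    rw [← integral_add (hw.const_mul k) (hwu.const_mul m)]
    congr 1 with x
    ring
  rw [h, hℓ, hℓ]
  linear_combination k * hsum

lemma tangent_exp2_affine (b : ℝ) :
    ∃ k m, ∀ v, exp2 b * (1 + (v - b) * Real.log 2) = k + m * v :=
  ⟨exp2 b * (1 - b * Real.log 2), exp2 b * Real.log 2, fun v => by ring⟩

lemma integrable_mul_tangent_exp2 (hw : Integrable w μ) (hwu : Integrable (fun x => w x * u x) μ)
    (b : ℝ) : Integrable (fun x => w x * (exp2 b * (1 + (u x - b) * Real.log 2))) μ := by
  obtain ⟨k, m, hℓ⟩ := tangent_exp2_affine b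
  simp_rw [hℓ, mul_add]
  exact (hw.mul_const k).add ((hwu.const_mul m).congr (ae_of_all _ fun x => by ring))

lemma exp2_mul_add_integral_le (hW : 0 ≤ W) (hw₀ : 0 ≤ᵐ[μ] w) (hw : Integrable w μ)
    (hwu : Integrable (fun x => w x * u x) μ)
    (hwe : Integrable (fun x => w x * exp2 (u x)) μ) (hsum : W + ∫ x, w x ∂μ = 1) :
    exp2 (W * a + ∫ x, w x * u x ∂μ) ≤ W * exp2 a + ∫ x, w x * exp2 (u x) ∂μ := by
  set E := W * a + ∫ x, w x * u x ∂μ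
  calc exp2 E = exp2 E * (1 + (E - E) * Real.log 2) := by ring
    _ = W * (exp2 E * (1 + (a - E) * Real.log 2))
          + ∫ x, w x * (exp2 E * (1 + (u x - E) * Real.log 2)) ∂μ :=
        (add_integral_mul_affine hw hwu hsum (tangent_exp2_affine E)).symm
    _ ≤ W * exp2 a + ∫ x, w x * exp2 (u x) ∂μ := by
        gcongr ?_ + ?_
        · exact mul_le_mul_of_nonneg_left (exp2_mul_one_add_le E a) hW
        · refine integral_mono_ae (integrable_mul_tangent_exp2 hw hwu E) hwe ?_
          filter_upwards [hw₀] with x hx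
          exact mul_le_mul_of_nonneg_left (exp2_mul_one_add_le E (u x)) hx

lemma mul_add_integral_le_exp2 {b : ℝ} (hW : W ≤ 0) (hw₀ : ∀ᵐ x ∂μ, w x ≤ 0 ∨ u x = b)
    (hw : Integrable w μ) (hwu : Integrable (fun x => w x * u x) μ)
    (hwe : Integrable (fun x => w x * exp2 (u x)) μ) (hsum : W + ∫ x, w x ∂μ = 1) :
    W * exp2 a + ∫ x, w x * exp2 (u x) ∂μ ≤ exp2 (W * a + ∫ x, w x * u x ∂μ) := by
  calc W * exp2 a + ∫ x, w x * exp2 (u x) ∂μ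
      ≤ W * (exp2 b * (1 + (a - b) * Real.log 2))
          + ∫ x, w x * (exp2 b * (1 + (u x - b) * Real.log 2)) ∂μ := by
        gcongr ?_ + ?_
        · exact mul_le_mul_of_nonpos_left (exp2_mul_one_add_le b a) hW
        · refine integral_mono_ae hwe (integrable_mul_tangent_exp2 hw hwu b) ?_
          filter_upwards [hw₀] with x hx
          rcases hx with hx | hx
          · exact mul_le_mul_of_nonpos_left (exp2_mul_one_add_le b (u x)) hx
          · simp [hx]
    _ = exp2 b * (1 + (W * a + ∫ x, w x * u x ∂μ - b) * Real.log 2) :=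
        add_integral_mul_affine hw hwu hsum (tangent_exp2_affine b)
    _ ≤ exp2 (W * a + ∫ x, w x * u x ∂μ) := exp2_mul_one_add_le b _

end WeightedJensen

section Renyi

variable {X : Type*} [Fintype X] {p q : X → ℝ}

lemma sum_rpow_pos (hp : ∀ x, 0 ≤ p x) (hpos : ∃ x, 0 < p x) (a : ℝ) : 0 < ∑ x, p x ^ a := by
  obtain ⟨x₀, hx₀⟩ := hpos
  exact Finset.sum_pos' (fun x _ => Real.rpow_nonneg (hp x) a)
    ⟨x₀, Finset.mem_univ _, Real.rpow_pos_of_pos hx₀ a⟩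

lemma exists_pos_of_mem_stdSimplex (hp : p ∈ stdSimplex ℝ X) : ∃ x, 0 < p x := by
  by_contra! h
  have : ∑ x, p x = 0 := Finset.sum_eq_zero fun x _ => le_antisymm (h x) (hp.1 x)
  simp [hp.2] at this

lemma card_pos_of_mem_stdSimplex (hp : p ∈ stdSimplex ℝ X) : (0 : ℝ) < Fintype.card X :=
  let ⟨x, _⟩ := exists_pos_of_mem_stdSimplex hp
  Nat.cast_pos.2 (Fintype.card_pos_iff.2 ⟨x⟩)

lemma sum_le_card_mul_of_concaveOn {φ : ℝ → ℝ} (hφ : ConcaveOn ℝ (Ici 0) φ)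
    (hp : p ∈ stdSimplex ℝ X) :
    ∑ x, φ (p x) ≤ Fintype.card X * φ (Fintype.card X : ℝ)⁻¹ := by
  have hn := card_pos_of_mem_stdSimplex hp
  have h := hφ.le_map_sum (t := Finset.univ) (w := fun _ => (Fintype.card X : ℝ)⁻¹)
    (fun _ _ => by positivity) (by simp [hn.ne']) (fun x _ => hp.1 x)
  simp only [smul_eq_mul, ← Finset.mul_sum, hp.2, mul_one] at h
  rwa [← le_div_iff₀' (inv_pos.2 hn), div_inv_eq_mul, mul_comm] at h

lemma renyi_one_eq (p : X → ℝ) : renyi 1 p = (∑ x, Real.negMulLog (p x)) / Real.log 2 := by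
  simp only [renyi, one_ne_zero, if_false, if_true, log2_eq_log_div, Real.negMulLog,
    Finset.sum_div, ← Finset.sum_neg_distrib]
  congr 1 with x
  ring

lemma renyi_one_mem_Icc (hp : p ∈ stdSimplex ℝ X) :
    renyi 1 p ∈ Icc 0 (log2 (Fintype.card X)) := by
  have hn := card_pos_of_mem_stdSimplex hp
  rw [renyi_one_eq, log2_eq_log_div]
  refine ⟨div_nonneg (Finset.sum_nonneg fun x _ => Real.negMulLog_nonneg (hp.1 x)
    (mem_Icc_of_mem_stdSimplex hp x).2) (Real.log_nonneg one_le_two), ?_⟩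
  gcongr
  calc ∑ x, Real.negMulLog (p x)
      ≤ Fintype.card X * Real.negMulLog (Fintype.card X : ℝ)⁻¹ :=
        sum_le_card_mul_of_concaveOn Real.concaveOn_negMulLog hp
    _ = Real.log (Fintype.card X) := by simp [Real.negMulLog, Real.log_inv, hn.ne']

lemma log2_mul_inv_rpow_self {n : ℝ} (hn : 0 < n) (a : ℝ) :
    log2 (n * n⁻¹ ^ a) = (1 - a) * log2 n := by
  rw [log2, Real.logb_mul hn.ne' (by positivity),
    Real.logb_rpow_eq_mul_logb_of_pos (by positivity), Real.logb_inv, log2]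
  ring

lemma inv_one_sub_mul_log2_sum_rpow_mem_Icc (hp : p ∈ stdSimplex ℝ X) {a : ℝ} (ha : 0 < a)
    (ha₁ : a ≠ 1) : (1 - a)⁻¹ * log2 (∑ x, p x ^ a) ∈ Icc 0 (log2 (Fintype.card X)) := by
  have hn := card_pos_of_mem_stdSimplex hp
  have hN := sum_rpow_pos hp.1 (exists_pos_of_mem_stdSimplex hp) a
  have hp01 := mem_Icc_of_mem_stdSimplex hp
  rw [inv_mul_eq_div]
  rcases lt_or_gt_of_ne ha₁ with ha₁ | ha₁
  · have hsum : 1 ≤ ∑ x, p x ^ a := hp.2 ▸ Finset.sum_le_sum fun x _ =>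
      Real.self_le_rpow_of_le_one (hp01 x).1 (hp01 x).2 ha₁.le
    have hjensen := sum_le_card_mul_of_concaveOn (Real.concaveOn_rpow ha.le ha₁.le) hp
    have hlog := Real.logb_le_logb_of_le one_lt_two hN hjensen
    rw [← log2, ← log2, log2_mul_inv_rpow_self hn] at hlog
    exact ⟨div_nonneg (Real.logb_nonneg one_lt_two hsum) (by linarith),
      (div_le_iff₀' (by linarith)).2 hlog⟩
  · have hsum : ∑ x, p x ^ a ≤ 1 := hp.2 ▸ Finset.sum_le_sum fun x _ =>
      Real.rpow_le_self_of_le_one (hp01 x).1 (hp01 x).2 ha₁.le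
    have hjensen := sum_le_card_mul_of_concaveOn (convexOn_rpow ha₁.le).neg hp
    simp only [Pi.neg_apply, Finset.sum_neg_distrib, mul_neg, neg_le_neg_iff] at hjensen
    have hlog := Real.logb_le_logb_of_le one_lt_two (by positivity) hjensen
    rw [← log2, ← log2, log2_mul_inv_rpow_self hn] at hlog
    exact ⟨div_nonneg_of_nonpos (Real.logb_nonpos one_lt_two hN.le hsum) (by linarith),
      (div_le_iff_of_neg' (by linarith)).2 hlog⟩

lemma renyi_mem_Icc (hp : p ∈ stdSimplex ℝ X) (α : ℝ≥0∞) :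
    renyi α p ∈ Icc 0 (log2 (Fintype.card X)) := by
  rcases eq_or_ne α 1 with rfl | h1
  · exact renyi_one_mem_Icc hp
  obtain ⟨x₀, hx₀⟩ := exists_pos_of_mem_stdSimplex hp
  have hn := card_pos_of_mem_stdSimplex hp
  rw [renyi, if_neg h1]
  split_ifs with h0 htop
  · have hpos : (1 : ℝ) ≤ Nat.card {x // 0 < p x} :=
      Nat.one_le_cast.2 (Nat.card_pos_iff.2 ⟨⟨⟨x₀, hx₀⟩⟩, inferInstance⟩)
    have hle : (Nat.card {x // 0 < p x} : ℝ) ≤ Fintype.card X := by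
      rw [Nat.card_eq_fintype_card]
      exact_mod_cast Fintype.card_subtype_le _
    exact ⟨Real.logb_nonneg one_lt_two hpos, Real.logb_le_logb_of_le one_lt_two (by linarith) hle⟩
  · have : Nonempty X := ⟨x₀⟩
    have hbdd : BddAbove (range p) := (finite_range p).bddAbove
    have hmax : (Fintype.card X : ℝ)⁻¹ ≤ ⨆ x, p x := by
      have h := Finset.sum_le_sum fun x (_ : x ∈ Finset.univ) => le_ciSup hbdd x
      simp only [hp.2, Finset.sum_const, Finset.card_univ, nsmul_eq_mul] at h
      exact (inv_le_iff_one_le_mul₀' hn).2 h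
    have hle : ⨆ x, p x ≤ 1 := ciSup_le fun x => (mem_Icc_of_mem_stdSimplex hp x).2
    have hlog := Real.logb_le_logb_of_le one_lt_two (inv_pos.2 hn) hmax
    rw [Real.logb_inv] at hlog
    exact ⟨neg_nonneg.2 (Real.logb_nonpos one_lt_two ((inv_pos.2 hn).le.trans hmax) hle), by
      unfold log2; linarith⟩
  · exact inv_one_sub_mul_log2_sum_rpow_mem_Icc hp (ENNReal.toReal_pos h0 htop)
      fun h => h1 ((ENNReal.toReal_eq_one_iff α).1 h)

lemma measurable_renyi (p : X → ℝ) : Measurable fun α : ℝ≥0∞ => renyi α p := by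
  unfold renyi
  refine Measurable.ite (measurableSet_singleton 0) measurable_const <|
    Measurable.ite (measurableSet_singleton 1) measurable_const <|
    Measurable.ite (measurableSet_singleton ⊤) measurable_const (by fun_prop)

lemma integrable_renyi (τ : Measure ℝ≥0∞) [IsFiniteMeasure τ] (hp : p ∈ stdSimplex ℝ X) :
    Integrable (fun α => renyi α p) τ :=
  .of_bound (measurable_renyi p).aestronglyMeasurable _ <| ae_of_all _ fun α => by
    obtain ⟨h0, h1⟩ := renyi_mem_Icc hp α
    rwa [Real.norm_eq_abs, abs_of_nonneg h0]

lemma renyi_zero_le (hp : p ∈ stdSimplex ℝ X) (hpq : ∀ x, 0 < p x → 0 < q x) :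
    renyi 0 p ≤ renyi 0 q := by
  obtain ⟨x₀, hx₀⟩ := exists_pos_of_mem_stdSimplex hp
  simp only [renyi, if_pos, Nat.card_eq_fintype_card]
  exact Real.logb_le_logb_of_le one_lt_two
    (Nat.cast_pos.2 (Fintype.card_pos_iff.2 ⟨⟨x₀, hx₀⟩⟩))
    (Nat.cast_le.2 (Fintype.card_subtype_mono _ _ hpq))

lemma concaveOn_log2_sum_rpow {a : ℝ} (ha : 0 ≤ a) (ha₁ : a ≤ 1) :
    ConcaveOn ℝ (stdSimplex ℝ X) fun p => log2 (∑ x, p x ^ a) := by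
  refine ⟨convex_stdSimplex ℝ X, fun p hp q hq l m hl hm hlm => ?_⟩
  have hNp := sum_rpow_pos hp.1 (exists_pos_of_mem_stdSimplex hp) a
  have hNq := sum_rpow_pos hq.1 (exists_pos_of_mem_stdSimplex hq) a
  have hmean : l * ∑ x, p x ^ a + m * ∑ x, q x ^ a ≤ ∑ x, (l • p + m • q) x ^ a := by
    rw [Finset.mul_sum, Finset.mul_sum, ← Finset.sum_add_distrib]
    gcongr with x
    exact (Real.concaveOn_rpow ha ha₁).2 (hp.1 x) (hq.1 x) hl hm hlm
  simp only [smul_eq_mul, log2_eq_log_div, mul_div_assoc', ← add_div]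
  gcongr
  exact (strictConcaveOn_log_Ioi.concaveOn.2 hNp hNq hl hm hlm).trans
    (Real.log_le_log (convex_Ioi (0 : ℝ) hNp hNq hl hm hlm) hmean)

lemma concaveOn_renyi {α : ℝ≥0∞} (hα : α ≤ 1) : ConcaveOn ℝ (stdSimplex ℝ X) (renyi α) := by
  refine ⟨convex_stdSimplex ℝ X, fun p hp q hq l m hl hm hlm => ?_⟩
  simp only [smul_eq_mul]
  rcases eq_or_ne α 0 with rfl | h0
  · have hp' : l * renyi 0 p ≤ l * renyi 0 (l • p + m • q) := by
      rcases hl.eq_or_lt with rfl | hl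
      · simp
      refine mul_le_mul_of_nonneg_left (renyi_zero_le hp fun x hx => ?_) hl.le
      simpa using add_pos_of_pos_of_nonneg (mul_pos hl hx) (mul_nonneg hm (hq.1 x))
    have hq' : m * renyi 0 q ≤ m * renyi 0 (l • p + m • q) := by
      rcases hm.eq_or_lt with rfl | hm
      · simp
      refine mul_le_mul_of_nonneg_left (renyi_zero_le hq fun x hx => ?_) hm.le
      simpa using add_pos_of_nonneg_of_pos (mul_nonneg hl (hp.1 x)) (mul_pos hm hx)
    linear_combination hp' + hq' + renyi 0 (l • p + m • q) * hlm
  rcases eq_or_ne α 1 with rfl | h1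
  · rw [renyi_one_eq, renyi_one_eq, renyi_one_eq, mul_div_assoc', mul_div_assoc', ← add_div,
      Finset.mul_sum, Finset.mul_sum, ← Finset.sum_add_distrib]
    gcongr with x
    exact Real.concaveOn_negMulLog.2 (hp.1 x) (hq.1 x) hl hm hlm
  have htop : α ≠ ⊤ := (hα.trans_lt ENNReal.one_lt_top).ne
  have ha₁ : α.toReal < 1 := by
    simpa using (ENNReal.toReal_lt_toReal htop ENNReal.one_ne_top).2 (hα.lt_of_ne h1)
  simp only [renyi, h0, h1, htop, if_false]
  simpa only [smul_eq_mul] using ((concaveOn_log2_sum_rpow ENNReal.toReal_nonneg ha₁.le).smul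
    (inv_nonneg.2 (sub_nonneg.2 ha₁.le))).2 hp hq hl hm hlm

end Renyi

section Homogeneous

variable {E : Type*} [AddCommGroup E] [Module ℝ E] {s : Set E} {f : E → ℝ}

lemma convexOn_of_subadditive (hadd : ∀ x ∈ s, ∀ y ∈ s, x + y ∈ s)
    (hsmul : ∀ x ∈ s, ∀ c : ℝ, 0 < c → c • x ∈ s)
    (hf : ∀ x ∈ s, ∀ c : ℝ, 0 < c → f (c • x) = c * f x)
    (hsub : ∀ x ∈ s, ∀ y ∈ s, f (x + y) ≤ f x + f y) : ConvexOn ℝ s f := by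
  have key : ∀ x ∈ s, ∀ y ∈ s, ∀ a b : ℝ, 0 ≤ a → 0 ≤ b → a + b = 1 →
      a • x + b • y ∈ s ∧ f (a • x + b • y) ≤ a • f x + b • f y := by
    intro x hx y hy a b ha hb hab
    rcases ha.eq_or_lt with rfl | ha
    · simp_all
    rcases hb.eq_or_lt with rfl | hb
    · simp_all
    refine ⟨hadd _ (hsmul x hx a ha) _ (hsmul y hy b hb), ?_⟩
    simpa only [hf x hx a ha, hf y hy b hb, smul_eq_mul] using
      hsub _ (hsmul x hx a ha) _ (hsmul y hy b hb)
  exact ⟨fun x hx y hy a b ha hb hab => (key x hx y hy a b ha hb hab).1,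
    fun x hx y hy a b ha hb hab => (key x hx y hy a b ha hb hab).2⟩

lemma concaveOn_of_superadditive (hadd : ∀ x ∈ s, ∀ y ∈ s, x + y ∈ s)
    (hsmul : ∀ x ∈ s, ∀ c : ℝ, 0 < c → c • x ∈ s)
    (hf : ∀ x ∈ s, ∀ c : ℝ, 0 < c → f (c • x) = c * f x)
    (hsuper : ∀ x ∈ s, ∀ y ∈ s, f x + f y ≤ f (x + y)) : ConcaveOn ℝ s f :=
  neg_convexOn_iff.1 <| convexOn_of_subadditive hadd hsmul
    (fun x hx c hc => by simp [hf x hx c hc]) fun x hx y hy => by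
      simp only [Pi.neg_apply]
      linarith [hsuper x hx y hy]

end Homogeneous

section Perspective

variable {ι : Type*} {x y : ι → ℝ}

def punctOrthant (ι : Type*) : Set (ι → ℝ) := {x | (∀ i, 0 ≤ x i) ∧ x ≠ 0}

lemma smul_mem_punctOrthant (hx : x ∈ punctOrthant ι) {c : ℝ} (hc : 0 < c) :
    c • x ∈ punctOrthant ι :=
  ⟨fun i => mul_nonneg hc.le (hx.1 i), (smul_ne_zero_iff.2 ⟨hc.ne', hx.2⟩)⟩

variable [Fintype ι]

def l1Normalize (x : ι → ℝ) : ι → ℝ := fun i => x i / ∑ j, x j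

def perspective (g : (ι → ℝ) → ℝ) (x : ι → ℝ) : ℝ := (∑ i, x i) * g (l1Normalize x)

lemma exists_pos_of_mem_punctOrthant (hx : x ∈ punctOrthant ι) : ∃ i, 0 < x i := by
  by_contra! h
  exact hx.2 (funext fun i => le_antisymm (h i) (hx.1 i))

lemma sum_pos_of_mem_punctOrthant (hx : x ∈ punctOrthant ι) : 0 < ∑ i, x i := by
  obtain ⟨i, hi⟩ := exists_pos_of_mem_punctOrthant hx
  exact Finset.sum_pos' (fun j _ => hx.1 j) ⟨i, Finset.mem_univ i, hi⟩

lemma add_mem_punctOrthant (hx : x ∈ punctOrthant ι) (hy : y ∈ punctOrthant ι) :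
    x + y ∈ punctOrthant ι := by
  obtain ⟨i, hi⟩ := exists_pos_of_mem_punctOrthant hx
  refine ⟨fun j => add_nonneg (hx.1 j) (hy.1 j), fun h => ?_⟩
  have := congrFun h i
  simp only [Pi.add_apply, Pi.zero_apply] at this
  linarith [hy.1 i]

lemma l1Normalize_mem_stdSimplex (hx : x ∈ punctOrthant ι) :
    l1Normalize x ∈ stdSimplex ℝ ι :=
  ⟨fun i => div_nonneg (hx.1 i) (sum_pos_of_mem_punctOrthant hx).le, by
    simp only [l1Normalize, ← Finset.sum_div, div_self (sum_pos_of_mem_punctOrthant hx).ne']⟩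

lemma l1Normalize_add (hx : x ∈ punctOrthant ι) (hy : y ∈ punctOrthant ι) :
    l1Normalize (x + y) = ((∑ i, x i) / ∑ i, (x + y) i) • l1Normalize x
      + ((∑ i, y i) / ∑ i, (x + y) i) • l1Normalize y := by
  have hx' := (sum_pos_of_mem_punctOrthant hx).ne'
  have hy' := (sum_pos_of_mem_punctOrthant hy).ne'
  have hxy := (sum_pos_of_mem_punctOrthant (add_mem_punctOrthant hx hy)).ne'
  ext i
  simp only [l1Normalize, Pi.add_apply, Pi.smul_apply, smul_eq_mul] at hxy ⊢
  field_simp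

lemma sum_div_add_sum_div_eq_one (hx : x ∈ punctOrthant ι) (hy : y ∈ punctOrthant ι) :
    (∑ i, x i) / (∑ i, (x + y) i) + (∑ i, y i) / (∑ i, (x + y) i) = 1 := by
  rw [← add_div, ← Finset.sum_add_distrib]
  exact div_self (sum_pos_of_mem_punctOrthant (add_mem_punctOrthant hx hy)).ne'

lemma perspective_smul (g : (ι → ℝ) → ℝ) (x : ι → ℝ) {c : ℝ} (hc : 0 < c) :
    perspective g (c • x) = c * perspective g x := by
  have : l1Normalize (c • x) = l1Normalize x := by
    ext i
    simp only [l1Normalize, Pi.smul_apply, smul_eq_mul, ← Finset.mul_sum,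
      mul_div_mul_left _ _ hc.ne']
  simp only [perspective, this, Pi.smul_apply, smul_eq_mul, ← Finset.mul_sum, mul_assoc]

lemma perspective_add_le {g : (ι → ℝ) → ℝ} (hg : ConvexOn ℝ (stdSimplex ℝ ι) g)
    (hx : x ∈ punctOrthant ι) (hy : y ∈ punctOrthant ι) :
    perspective g (x + y) ≤ perspective g x + perspective g y := by
  have hxy := sum_pos_of_mem_punctOrthant (add_mem_punctOrthant hx hy)
  have hsum : ∑ i, (x + y) i = (∑ i, x i) + ∑ i, y i := Finset.sum_add_distrib
  calc perspective g (x + y)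
      ≤ (∑ i, (x + y) i) * ((∑ i, x i) / (∑ i, (x + y) i) * g (l1Normalize x)
          + (∑ i, y i) / (∑ i, (x + y) i) * g (l1Normalize y)) := by
        rw [perspective, l1Normalize_add hx hy]
        refine mul_le_mul_of_nonneg_left (hg.2 (l1Normalize_mem_stdSimplex hx)
          (l1Normalize_mem_stdSimplex hy) (div_nonneg (sum_pos_of_mem_punctOrthant hx).le hxy.le)
          (div_nonneg (sum_pos_of_mem_punctOrthant hy).le hxy.le) ?_) hxy.le
        rw [← add_div, ← hsum, div_self hxy.ne']
    _ = perspective g x + perspective g y := by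
        simp only [perspective, mul_add, ← mul_assoc, mul_div_cancel₀ _ hxy.ne']

lemma convexOn_perspective_of_add_le {g : (ι → ℝ) → ℝ}
    (h : ∀ x ∈ punctOrthant ι, ∀ y ∈ punctOrthant ι,
      perspective g (x + y) ≤ perspective g x + perspective g y) :
    ConvexOn ℝ (punctOrthant ι) (perspective g) :=
  convexOn_of_subadditive (fun _ hx _ hy => add_mem_punctOrthant hx hy)
    (fun _ hx _ hc => smul_mem_punctOrthant hx hc) (fun x _ _ hc => perspective_smul g x hc) h

lemma concaveOn_perspective_of_add_le {g : (ι → ℝ) → ℝ}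
    (h : ∀ x ∈ punctOrthant ι, ∀ y ∈ punctOrthant ι,
      perspective g x + perspective g y ≤ perspective g (x + y)) :
    ConcaveOn ℝ (punctOrthant ι) (perspective g) :=
  concaveOn_of_superadditive (fun _ hx _ hy => add_mem_punctOrthant hx hy)
    (fun _ hx _ hc => smul_mem_punctOrthant hx hc) (fun x _ _ hc => perspective_smul g x hc) h

lemma ConvexOn.perspective {g : (ι → ℝ) → ℝ} (hg : ConvexOn ℝ (stdSimplex ℝ ι) g) :
    ConvexOn ℝ (punctOrthant ι) (perspective g) :=
  convexOn_perspective_of_add_le fun _ hx _ hy => perspective_add_le hg hx hy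

end Perspective

section AlphaNorm

variable {ι : Type*} [Fintype ι] {x y v z : ι → ℝ}

lemma add_Lp_le_Lp_add_of_lt_one {a : ℝ} (ha : 0 < a) (ha₁ : a < 1) (hx : ∀ i, 0 ≤ x i)
    (hy : ∀ i, 0 ≤ y i) (hX : 0 < ∑ i, x i ^ a) (hY : 0 < ∑ i, y i ^ a) :
    (∑ i, x i ^ a) ^ (1 / a) + (∑ i, y i ^ a) ^ (1 / a) ≤ (∑ i, (x i + y i) ^ a) ^ (1 / a) := by
  have norm_rpow : ∀ {z : ι → ℝ}, (∀ i, 0 ≤ z i) → 0 < ∑ i, z i ^ a →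
      ∑ i, (z i / (∑ i, z i ^ a) ^ (1 / a)) ^ a = 1 := fun hz hZ => by
    simp_rw [Real.div_rpow (hz _) (Real.rpow_nonneg hZ.le _)]
    rw [← Finset.sum_div, one_div, Real.rpow_inv_rpow hZ.le ha.ne', div_self hZ.ne']
  set X := (∑ i, x i ^ a) ^ (1 / a)
  set Y := (∑ i, y i ^ a) ^ (1 / a)
  have hX' : 0 < X := Real.rpow_pos_of_pos hX _
  have hY' : 0 < Y := Real.rpow_pos_of_pos hY _
  set T := X + Y
  have hT : 0 < T := add_pos hX' hY'
  -- `x + y` is `T` times a convex combination of the unit vectors `x / X` and `y / Y`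
  have hpt : ∀ i, T ^ a * (X / T * (x i / X) ^ a + Y / T * (y i / Y) ^ a) ≤ (x i + y i) ^ a := by
    intro i
    have hc := (Real.concaveOn_rpow ha.le ha₁.le).2 (div_nonneg (hx i) hX'.le)
      (div_nonneg (hy i) hY'.le) (div_pos hX' hT).le (div_pos hY' hT).le
      (by rw [← add_div, div_self hT.ne'])
    have he : x i + y i = T * (X / T * (x i / X) + Y / T * (y i / Y)) := by
      field_simp
    have := hx i
    have := hy i
    rw [he, Real.mul_rpow hT.le (by positivity)]
    exact mul_le_mul_of_nonneg_left hc (by positivity)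
  have hsum : T ^ a ≤ ∑ i, (x i + y i) ^ a := calc
    T ^ a = ∑ i, T ^ a * (X / T * (x i / X) ^ a + Y / T * (y i / Y) ^ a) := by
        rw [← Finset.mul_sum, Finset.sum_add_distrib, ← Finset.mul_sum, ← Finset.mul_sum,
          norm_rpow hx hX, norm_rpow hy hY, mul_one, mul_one, ← add_div, div_self hT.ne', mul_one]
    _ ≤ _ := Finset.sum_le_sum fun i _ => hpt i
  calc X + Y = (T ^ a) ^ (1 / a) := by rw [one_div, Real.rpow_rpow_inv hT.le ha.ne']
    _ ≤ _ := Real.rpow_le_rpow (by positivity) hsum (by positivity)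

lemma aRatio_zero : aRatio 0 = 0 := by simp [aRatio]

lemma aRatio_nonneg_of_lt_one {α : ℝ≥0∞} (h : α < 1) : 0 ≤ aRatio α := by
  have htop : α ≠ ⊤ := (h.trans ENNReal.one_lt_top).ne
  have : α.toReal < 1 := by simpa using (ENNReal.toReal_lt_toReal htop ENNReal.one_ne_top).2 h
  rw [aRatio, if_neg htop]
  exact div_nonneg ENNReal.toReal_nonneg (by linarith)

lemma aRatio_nonpos_of_one_lt {α : ℝ≥0∞} (h : 1 < α) : aRatio α ≤ 0 := by
  rcases eq_or_ne α ⊤ with rfl | htop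
  · simp [aRatio]
  have : 1 < α.toReal := by simpa using (ENNReal.toReal_lt_toReal ENNReal.one_ne_top htop).2 h
  rw [aRatio, if_neg htop]
  exact div_nonpos_of_nonneg_of_nonpos ENNReal.toReal_nonneg (by linarith)

/-- At `α = 0` this is the junk value `1` (as `1 / 0 = 0`); it only occurs multiplied by
`aRatio 0 = 0`. -/
def alphaNorm (α : ℝ≥0∞) (x : ι → ℝ) : ℝ :=
  if α = ⊤ then ⨆ i, x i else (∑ i, x i ^ α.toReal) ^ (1 / α.toReal)

lemma measurable_alphaNorm (x : ι → ℝ) : Measurable fun α => alphaNorm α x :=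
  Measurable.ite (measurableSet_singleton ⊤) measurable_const (by fun_prop)

lemma alphaNorm_pos (hx : x ∈ punctOrthant ι) (α : ℝ≥0∞) : 0 < alphaNorm α x := by
  obtain ⟨i, hi⟩ := exists_pos_of_mem_punctOrthant hx
  rw [alphaNorm]
  split_ifs
  · exact hi.trans_le (le_ciSup (finite_range x).bddAbove i)
  · exact Real.rpow_pos_of_pos (sum_rpow_pos hx.1 ⟨i, hi⟩ _) _

lemma alphaNorm_le_alphaNorm (hx : 0 ≤ x) (hxy : x ≤ y) (α : ℝ≥0∞) :
    alphaNorm α x ≤ alphaNorm α y := by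
  rw [alphaNorm, alphaNorm]
  split_ifs
  · exact ciSup_mono (finite_range y).bddAbove hxy
  · gcongr with i
    · exact Finset.sum_nonneg fun i _ => Real.rpow_nonneg (hx i) _
    · exact hx i
    · exact hxy i

/-- Minkowski's inequality for `α ≥ 1` and its reverse for `α ≤ 1`, combined through the sign
change of `aRatio α` at `α = 1`. -/
lemma aRatio_mul_alphaNorm_add_le (hx : x ∈ punctOrthant ι) (hy : y ∈ punctOrthant ι)
    (α : ℝ≥0∞) :
    aRatio α * (alphaNorm α x + alphaNorm α y) ≤ aRatio α * alphaNorm α (x + y) := by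
  rcases eq_or_ne (aRatio α) 0 with h | hr
  · simp [h]
  rcases eq_or_ne α ⊤ with rfl | htop
  · obtain ⟨i, -⟩ := exists_pos_of_mem_punctOrthant hx
    have : Nonempty ι := ⟨i⟩
    simp only [aRatio, alphaNorm, if_true, neg_one_mul, neg_le_neg_iff]
    exact ciSup_le fun j => add_le_add (le_ciSup (finite_range x).bddAbove j)
      (le_ciSup (finite_range y).bddAbove j)
  rcases lt_or_gt_of_ne (show α ≠ 1 by rintro rfl; simp [aRatio] at hr) with h1 | h1
  · have h0 : α ≠ 0 := by rintro rfl; exact hr aRatio_zero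
    have ha : 0 < α.toReal := ENNReal.toReal_pos h0 htop
    have ha₁ : α.toReal < 1 := by
      simpa using (ENNReal.toReal_lt_toReal htop ENNReal.one_ne_top).2 h1
    refine mul_le_mul_of_nonneg_left ?_ (aRatio_nonneg_of_lt_one h1)
    simp only [alphaNorm, if_neg htop, Pi.add_apply]
    exact add_Lp_le_Lp_add_of_lt_one ha ha₁ hx.1 hy.1
      (sum_rpow_pos hx.1 (exists_pos_of_mem_punctOrthant hx) _)
      (sum_rpow_pos hy.1 (exists_pos_of_mem_punctOrthant hy) _)
  · have ha₁ : 1 ≤ α.toReal := by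
      simpa using (ENNReal.toReal_le_toReal ENNReal.one_ne_top htop).2 h1.le
    refine mul_le_mul_of_nonpos_left ?_ (aRatio_nonpos_of_one_lt h1)
    simp only [alphaNorm, if_neg htop, Pi.add_apply]
    exact Real.Lp_add_le_of_nonneg Finset.univ ha₁ (fun i _ => hx.1 i) (fun i _ => hy.1 i)

lemma renyi_l1Normalize (hx : x ∈ punctOrthant ι) {α : ℝ≥0∞} (h0 : α ≠ 0) (h1 : α ≠ 1) :
    renyi α (l1Normalize x) = aRatio α * log2 (alphaNorm α x / ∑ i, x i) := by
  have hS := sum_pos_of_mem_punctOrthant hx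
  rcases eq_or_ne α ⊤ with rfl | htop
  · have : (⨆ i, l1Normalize x i) = (⨆ i, x i) / ∑ i, x i := by
      simp only [l1Normalize, div_eq_mul_inv, Real.iSup_mul_of_nonneg (inv_nonneg.2 hS.le)]
    simp [renyi, aRatio, alphaNorm, this]
  have ha : 0 < α.toReal := ENNReal.toReal_pos h0 htop
  have ha₁ : 1 - α.toReal ≠ 0 :=
    sub_ne_zero.2 fun h => h1 ((ENNReal.toReal_eq_one_iff α).1 h.symm)
  have hN := sum_rpow_pos hx.1 (exists_pos_of_mem_punctOrthant hx) α.toReal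
  have hsum : ∑ i, l1Normalize x i ^ α.toReal = (∑ i, x i ^ α.toReal) / (∑ i, x i) ^ α.toReal := by
    simp only [l1Normalize, Finset.sum_div, Real.div_rpow (hx.1 _) hS.le]
  simp only [renyi, aRatio, alphaNorm, h0, h1, htop, if_false, hsum, log2]
  rw [Real.logb_div hN.ne' (by positivity), Real.logb_div (by positivity) hS.ne',
    Real.logb_rpow_eq_mul_logb_of_pos hS, Real.logb_rpow_eq_mul_logb_of_pos hN]
  field_simp

lemma aRatio_mul_log2_alphaNorm_div (hv : v ∈ punctOrthant ι) (hz : z ∈ punctOrthant ι)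
    {α : ℝ≥0∞} (h0 : α ≠ 0) (h1 : α ≠ 1) :
    aRatio α * log2 (alphaNorm α v / alphaNorm α z) = renyi α (l1Normalize v)
      - renyi α (l1Normalize z) + aRatio α * log2 ((∑ i, v i) / ∑ i, z i) := by
  have hv' := alphaNorm_pos hv α
  have hz' := alphaNorm_pos hz α
  have hSv := sum_pos_of_mem_punctOrthant hv
  have hSz := sum_pos_of_mem_punctOrthant hz
  rw [renyi_l1Normalize hv h0 h1, renyi_l1Normalize hz h0 h1]
  simp only [log2]
  rw [Real.logb_div hv'.ne' hz'.ne', Real.logb_div hv'.ne' hSv.ne', Real.logb_div hz'.ne' hSz.ne',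
    Real.logb_div hSv.ne' hSz.ne']
  ring

end AlphaNorm

section Integrals

variable {ι : Type*} [Fintype ι] {τ : Measure ℝ≥0∞} {x y v z : ι → ℝ}

lemma integrable_aRatio_mul_alphaNorm_div (hint : Integrable aRatio τ)
    (hv : v ∈ punctOrthant ι) (hz : z ∈ punctOrthant ι) (hvz : v ≤ z) :
    Integrable (fun α => aRatio α * (alphaNorm α v / alphaNorm α z)) τ := by
  refine hint.mul_bdd ((measurable_alphaNorm v).div (measurable_alphaNorm z)).aestronglyMeasurable
    (c := 1) (ae_of_all _ fun α => ?_)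
  rw [Real.norm_eq_abs, abs_of_pos (div_pos (alphaNorm_pos hv α) (alphaNorm_pos hz α))]
  exact div_le_one_of_le₀ (alphaNorm_le_alphaNorm hv.1 hvz α) (alphaNorm_pos hz α).le

lemma integral_aRatio_mul_alphaNorm_div_add_le (hint : Integrable aRatio τ)
    (hx : x ∈ punctOrthant ι) (hy : y ∈ punctOrthant ι) :
    ∫ α, aRatio α * (alphaNorm α x / alphaNorm α (x + y)) ∂τ
      + ∫ α, aRatio α * (alphaNorm α y / alphaNorm α (x + y)) ∂τ ≤ ∫ α, aRatio α ∂τ := by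
  have hz := add_mem_punctOrthant hx hy
  have hx' := integrable_aRatio_mul_alphaNorm_div hint hx hz (le_add_of_nonneg_right hy.1)
  have hy' := integrable_aRatio_mul_alphaNorm_div hint hy hz (le_add_of_nonneg_left hx.1)
  rw [← integral_add hx' hy']
  refine integral_mono (hx'.add hy') hint fun α => ?_
  rw [← mul_add, ← add_div, mul_div_assoc', div_le_iff₀ (alphaNorm_pos hz α)]
  exact aRatio_mul_alphaNorm_add_le hx hy α

variable [IsFiniteMeasure τ]

lemma integrable_aRatio_mul_log2_alphaNorm_div (hτ : ∀ᵐ α ∂τ, α ≠ 1)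
    (hint : Integrable aRatio τ) (hv : v ∈ punctOrthant ι) (hz : z ∈ punctOrthant ι) :
    Integrable (fun α => aRatio α * log2 (alphaNorm α v / alphaNorm α z)) τ := by
  have hg : Integrable (fun α => renyi α (l1Normalize v) - renyi α (l1Normalize z)
      + aRatio α * log2 ((∑ i, v i) / ∑ i, z i)) τ :=
    ((integrable_renyi τ (l1Normalize_mem_stdSimplex hv)).sub
      (integrable_renyi τ (l1Normalize_mem_stdSimplex hz))).add (hint.mul_const _)
  refine (hg.indicator (measurableSet_singleton 0).compl).congr ?_
  filter_upwards [hτ] with α h1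
  rcases eq_or_ne α 0 with rfl | h0
  · simp [aRatio_zero]
  · simp [h0, aRatio_mul_log2_alphaNorm_div hv hz h0 h1]

lemma integral_renyi_le (hτ : ∀ᵐ α ∂τ, α ≠ 1) (hint : Integrable aRatio τ)
    (hv : v ∈ punctOrthant ι) (hz : z ∈ punctOrthant ι) (hvz : v ≤ z) :
    ∫ α, renyi α (l1Normalize v) ∂τ ≤ ∫ α, renyi α (l1Normalize z) ∂τ
      + ∫ α, aRatio α * log2 (alphaNorm α v / alphaNorm α z) ∂τ
      - (∫ α, aRatio α ∂τ) * log2 ((∑ i, v i) / ∑ i, z i) := by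
  have hSv := sum_pos_of_mem_punctOrthant hv
  have hHv := integrable_renyi τ (l1Normalize_mem_stdSimplex hv)
  have hHz := integrable_renyi τ (l1Normalize_mem_stdSimplex hz)
  have hlog := integrable_aRatio_mul_log2_alphaNorm_div hτ hint hv hz
  have hadd : Integrable (fun α => renyi α (l1Normalize z)
      + aRatio α * log2 (alphaNorm α v / alphaNorm α z)) τ := hHz.add hlog
  rw [← integral_mul_const, ← integral_add hHz hlog, ← integral_sub hadd (hint.mul_const _)]
  refine integral_mono_ae hHv (hadd.sub (hint.mul_const _)) ?_
  filter_upwards [hτ] with α h1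
  rcases eq_or_ne α 0 with rfl | h0
  · simp only [aRatio_zero, zero_mul, add_zero, sub_zero]
    refine renyi_zero_le (l1Normalize_mem_stdSimplex hv) fun i hi => ?_
    exact div_pos (((div_pos_iff_of_pos_right hSv).1 hi).trans_le (hvz i))
      (sum_pos_of_mem_punctOrthant hz)
  · linarith [aRatio_mul_log2_alphaNorm_div hv hz h0 h1]

end Integrals

section RenyiPerspective

variable {ι : Type*} [Fintype ι] {τ : Measure ℝ≥0∞} {t : ℝ} {x y v z : ι → ℝ}

def renyiExp (τ : Measure ℝ≥0∞) (t : ℝ) (p : ι → ℝ) : ℝ := exp2 (t * ∫ α, renyi α p ∂τ)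

lemma perspective_renyiExp_eq (hv : v ∈ punctOrthant ι) (hz : z ∈ punctOrthant ι) :
    perspective (renyiExp τ t) v = perspective (renyiExp τ t) z
      * exp2 (log2 ((∑ i, v i) / ∑ i, z i) + t * ∫ α, renyi α (l1Normalize v) ∂τ
        - t * ∫ α, renyi α (l1Normalize z) ∂τ) := by
  have hSv := sum_pos_of_mem_punctOrthant hv
  have hSz := sum_pos_of_mem_punctOrthant hz
  rw [sub_eq_add_neg, exp2_add, exp2_add, exp2_log2 (div_pos hSv hSz), exp2_neg]
  simp only [perspective, renyiExp]
  field_simp [(exp2_pos _).ne']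

lemma perspective_renyiExp_pos (hz : z ∈ punctOrthant ι) : 0 < perspective (renyiExp τ t) z :=
  mul_pos (sum_pos_of_mem_punctOrthant hz) (exp2_pos _)

variable [IsFiniteMeasure τ]

lemma perspective_renyiExp_le_mul (ht : 0 < t) (hτ : ∀ᵐ α ∂τ, α < 1) (hint : Integrable aRatio τ)
    (hs : t * ∫ α, aRatio α ∂τ ≤ 1) (hv : v ∈ punctOrthant ι) (hz : z ∈ punctOrthant ι)
    (hvz : v ≤ z) :
    perspective (renyiExp τ t) v ≤ perspective (renyiExp τ t) z
      * ((1 - t * ∫ α, aRatio α ∂τ) * ((∑ i, v i) / ∑ i, z i)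
        + t * ∫ α, aRatio α * (alphaNorm α v / alphaNorm α z) ∂τ) := by
  have hlam := div_pos (sum_pos_of_mem_punctOrthant hv) (sum_pos_of_mem_punctOrthant hz)
  have hexp : ∀ α, exp2 (log2 (alphaNorm α v / alphaNorm α z)) = alphaNorm α v / alphaNorm α z :=
    fun α => exp2_log2 (div_pos (alphaNorm_pos hv α) (alphaNorm_pos hz α))
  have hτ₁ : ∀ᵐ α ∂τ, α ≠ 1 := hτ.mono fun α h => h.ne
  have hlog := integrable_aRatio_mul_log2_alphaNorm_div hτ₁ hint hv hz
  have hjensen := exp2_mul_add_integral_le (a := log2 ((∑ i, v i) / ∑ i, z i))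
    (w := fun α => t * aRatio α) (u := fun α => log2 (alphaNorm α v / alphaNorm α z))
    (sub_nonneg.2 hs) (hτ.mono fun α h => mul_nonneg ht.le (aRatio_nonneg_of_lt_one h))
    (hint.const_mul t) (by simpa only [mul_assoc] using hlog.const_mul t)
    (by simpa only [mul_assoc, hexp] using
      (integrable_aRatio_mul_alphaNorm_div hint hv hz hvz).const_mul t)
    (by rw [integral_const_mul]; ring)
  simp only [hexp, exp2_log2 hlam, mul_assoc, integral_const_mul] at hjensen
  have hmaster := mul_le_mul_of_nonneg_left (integral_renyi_le hτ₁ hint hv hz hvz) ht.le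
  rw [perspective_renyiExp_eq hv hz]
  refine mul_le_mul_of_nonneg_left (le_trans (exp2_le_exp2.2 ?_) hjensen) ?_
  · linarith
  · exact (perspective_renyiExp_pos hz).le

lemma mul_le_perspective_renyiExp (ht : t < 0) {αstar : ℝ≥0∞} (hstar : 1 < αstar)
    (hτ : ∀ᵐ α ∂τ, α < 1 ∨ α = αstar) (hint : Integrable aRatio τ)
    (hs : 1 ≤ t * ∫ α, aRatio α ∂τ) (hv : v ∈ punctOrthant ι) (hz : z ∈ punctOrthant ι)
    (hvz : v ≤ z) :
    perspective (renyiExp τ t) z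
      * ((1 - t * ∫ α, aRatio α ∂τ) * ((∑ i, v i) / ∑ i, z i)
        + t * ∫ α, aRatio α * (alphaNorm α v / alphaNorm α z) ∂τ)
      ≤ perspective (renyiExp τ t) v := by
  have hlam := div_pos (sum_pos_of_mem_punctOrthant hv) (sum_pos_of_mem_punctOrthant hz)
  have hexp : ∀ α, exp2 (log2 (alphaNorm α v / alphaNorm α z)) = alphaNorm α v / alphaNorm α z :=
    fun α => exp2_log2 (div_pos (alphaNorm_pos hv α) (alphaNorm_pos hz α))
  have hτ₁ : ∀ᵐ α ∂τ, α ≠ 1 := hτ.mono fun α h => h.elim ne_of_lt fun h => h ▸ hstar.ne'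
  have hlog := integrable_aRatio_mul_log2_alphaNorm_div hτ₁ hint hv hz
  have hjensen := mul_add_integral_le_exp2 (a := log2 ((∑ i, v i) / ∑ i, z i))
    (w := fun α => t * aRatio α) (u := fun α => log2 (alphaNorm α v / alphaNorm α z))
    (b := log2 (alphaNorm αstar v / alphaNorm αstar z)) (sub_nonpos.2 hs)
    (hτ.mono fun α h => h.imp (fun h => mul_nonpos_of_nonpos_of_nonneg ht.le
      (aRatio_nonneg_of_lt_one h)) fun h => by rw [h])
    (hint.const_mul t) (by simpa only [mul_assoc] using hlog.const_mul t)
    (by simpa only [mul_assoc, hexp] using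
      (integrable_aRatio_mul_alphaNorm_div hint hv hz hvz).const_mul t)
    (by rw [integral_const_mul]; ring)
  simp only [hexp, exp2_log2 hlam, mul_assoc, integral_const_mul] at hjensen
  have hmaster := mul_le_mul_of_nonpos_left (integral_renyi_le hτ₁ hint hv hz hvz) ht.le
  rw [perspective_renyiExp_eq hv hz]
  refine mul_le_mul_of_nonneg_left (le_trans hjensen (exp2_le_exp2.2 ?_))
    (perspective_renyiExp_pos hz).le
  linarith

lemma le_perspective_renyiExp_add (ht : 0 < t) (hτ : ∀ᵐ α ∂τ, α < 1)
    (hint : Integrable aRatio τ) (hs : t * ∫ α, aRatio α ∂τ ≤ 1)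
    (hx : x ∈ punctOrthant ι) (hy : y ∈ punctOrthant ι) :
    perspective (renyiExp τ t) x + perspective (renyiExp τ t) y
      ≤ perspective (renyiExp τ t) (x + y) := by
  have hz := add_mem_punctOrthant hx hy
  have hmink := mul_le_mul_of_nonneg_left (integral_aRatio_mul_alphaNorm_div_add_le hint hx hy)
    ht.le
  calc _ ≤ _ := add_le_add
        (perspective_renyiExp_le_mul ht hτ hint hs hx hz (le_add_of_nonneg_right hy.1))
        (perspective_renyiExp_le_mul ht hτ hint hs hy hz (le_add_of_nonneg_left hx.1))
    _ ≤ perspective (renyiExp τ t) (x + y) * 1 := by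
        rw [← mul_add]
        refine mul_le_mul_of_nonneg_left ?_ (perspective_renyiExp_pos hz).le
        have := sum_div_add_sum_div_eq_one hx hy
        linear_combination (1 - t * ∫ α, aRatio α ∂τ) * this + hmink
    _ = _ := mul_one _

lemma perspective_renyiExp_add_le (ht : t < 0) {αstar : ℝ≥0∞} (hstar : 1 < αstar)
    (hτ : ∀ᵐ α ∂τ, α < 1 ∨ α = αstar) (hint : Integrable aRatio τ)
    (hs : 1 ≤ t * ∫ α, aRatio α ∂τ) (hx : x ∈ punctOrthant ι) (hy : y ∈ punctOrthant ι) :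
    perspective (renyiExp τ t) (x + y)
      ≤ perspective (renyiExp τ t) x + perspective (renyiExp τ t) y := by
  have hz := add_mem_punctOrthant hx hy
  have hmink := mul_le_mul_of_nonpos_left (integral_aRatio_mul_alphaNorm_div_add_le hint hx hy)
    ht.le
  calc _ = perspective (renyiExp τ t) (x + y) * 1 := (mul_one _).symm
    _ ≤ _ := by
        rw [← mul_add]
        refine mul_le_mul_of_nonneg_left ?_ (perspective_renyiExp_pos hz).le
        have := sum_div_add_sum_div_eq_one hx hy
        linear_combination (t * ∫ α, aRatio α ∂τ - 1) * this + hmink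
    _ ≤ _ := add_le_add
        (mul_le_perspective_renyiExp ht hstar hτ hint hs hx hz (le_add_of_nonneg_right hy.1))
        (mul_le_perspective_renyiExp ht hstar hτ hint hs hy hz (le_add_of_nonneg_left hx.1))

lemma concaveOn_integral_renyi (hτ : ∀ᵐ α ∂τ, α ≤ 1) :
    ConcaveOn ℝ (stdSimplex ℝ ι) fun p => ∫ α, renyi α p ∂τ := by
  refine ⟨convex_stdSimplex ℝ ι, fun p hp q hq l m hl hm hlm => ?_⟩
  simp only [smul_eq_mul]
  rw [← integral_const_mul, ← integral_const_mul,
    ← integral_add ((integrable_renyi τ hp).const_mul l) ((integrable_renyi τ hq).const_mul m)]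
  refine integral_mono_ae (((integrable_renyi τ hp).const_mul l).add
    ((integrable_renyi τ hq).const_mul m))
    (integrable_renyi τ (convex_stdSimplex ℝ ι hp hq hl hm hlm)) ?_
  filter_upwards [hτ] with α hα
  exact (concaveOn_renyi hα).2 hp hq hl hm hlm

lemma convexOn_renyiExp (ht : t ≤ 0) (hτ : ∀ᵐ α ∂τ, α ≤ 1) :
    ConvexOn ℝ (stdSimplex ℝ ι) (renyiExp τ t) := by
  refine ⟨convex_stdSimplex ℝ ι, fun p hp q hq l m hl hm hlm => ?_⟩
  have hG := mul_le_mul_of_nonpos_left ((concaveOn_integral_renyi hτ).2 hp hq hl hm hlm) ht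
  calc renyiExp τ t (l • p + m • q)
      ≤ exp2 (l • (t * ∫ α, renyi α p ∂τ) + m • (t * ∫ α, renyi α q ∂τ)) := by
        refine exp2_le_exp2.2 (hG.trans_eq ?_)
        simp only [smul_eq_mul]
        ring
    _ ≤ _ := convexOn_exp2.2 trivial trivial hl hm hlm

end RenyiPerspective

theorem measure_concavity_convexity_general (τ : Measure ℝ≥0∞) (hτ : IsProbabilityMeasure τ)
    (t : ℝ) (d : ℕ) :
    ((0 < t ∧ τ {α | 1 < α} = 0 ∧ τ {1} = 0 ∧
        IntegrableOn aRatio (Set.Iio 1) τ ∧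
        ∫ α in Set.Iio (1 : ℝ≥0∞), aRatio α ∂τ ≤ 1 / t) →
      ConcaveOn ℝ {x : Fin d → ℝ | (∀ i, 0 ≤ x i) ∧ x ≠ 0}
        (fun x => (∑ i, x i) *
          exp2 (t * ∫ α, renyi α (fun i => x i / ∑ j, x j) ∂τ))) ∧
    ((t < 0 ∧ (τ {α | 1 < α} = 0 ∨
        (∃ αstar : ℝ≥0∞, 1 < αstar ∧ τ {α | 1 < α ∧ α ≠ αstar} = 0 ∧ τ {1} = 0 ∧
          Integrable aRatio τ ∧ ∫ α, aRatio α ∂τ ≤ 1 / t))) →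
      ConvexOn ℝ {x : Fin d → ℝ | (∀ i, 0 ≤ x i) ∧ x ≠ 0}
        (fun x => (∑ i, x i) *
          exp2 (t * ∫ α, renyi α (fun i => x i / ∑ j, x j) ∂τ))) := by
  refine ⟨fun ⟨ht, hgt, h1, hint, hle⟩ => ?_, fun ⟨ht, hcase⟩ => ?_⟩
  · have hlt : ∀ᵐ α ∂τ, α < 1 := by
      filter_upwards [measure_eq_zero_iff_ae_notMem.1 hgt, measure_eq_zero_iff_ae_notMem.1 h1]
        with α hle hne using lt_of_le_of_ne (not_lt.1 hle) hne
    have hres : τ.restrict (Set.Iio 1) = τ := Measure.restrict_eq_self_of_ae_mem hlt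
    rw [IntegrableOn, hres] at hint
    rw [hres] at hle
    exact concaveOn_perspective_of_add_le fun x hx y hy =>
      le_perspective_renyiExp_add ht hlt hint ((le_div_iff₀' ht).1 hle) hx hy
  rcases hcase with hgt | ⟨αstar, hstar, hnull, h1, hint, hle⟩
  · refine (convexOn_renyiExp ht.le ?_).perspective
    filter_upwards [measure_eq_zero_iff_ae_notMem.1 hgt] with α h using not_lt.1 h
  · have hsupp : ∀ᵐ α ∂τ, α < 1 ∨ α = αstar := by
      filter_upwards [measure_eq_zero_iff_ae_notMem.1 hnull,
        measure_eq_zero_iff_ae_notMem.1 h1] with α hnot hne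
      exact (lt_or_gt_of_ne hne).imp_right fun hgt => not_not.1 fun hne' => hnot ⟨hgt, hne'⟩
    exact convexOn_perspective_of_add_le fun x hx y hy =>
      perspective_renyiExp_add_le ht hstar hsupp hint ((le_div_iff_of_neg' ht).1 hle) hx hy

/-- Concavity/convexity for general probability measures: sufficient
conditions on `t` and the Borel probability measure `τ` on `[0,∞]` under which
`x ↦ ‖x‖₁ · 2^(t·∫ H_α(x/‖x‖₁) dτ(α))` is concave, respectively convex, on
`(ℝ≥0)^d ∖ {0}`.  (Here `supp(τ) ⊆ [0,1]` is expressed as `τ((1,∞]) = 0`.) -/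
theorem measure_concavity_convexity (τ : Measure ℝ≥0∞) (hτ : IsProbabilityMeasure τ)
    (t : ℝ) (ht : t ≠ 0) (d : ℕ) :
    ((0 < t ∧ τ {α | 1 < α} = 0 ∧ τ {1} = 0 ∧
        IntegrableOn aRatio (Set.Iio 1) τ ∧
        ∫ α in Set.Iio (1 : ℝ≥0∞), aRatio α ∂τ ≤ 1 / t) →
      ConcaveOn ℝ {x : Fin d → ℝ | (∀ i, 0 ≤ x i) ∧ x ≠ 0}
        (fun x => (∑ i, x i) *
          exp2 (t * ∫ α, renyi α (fun i => x i / ∑ j, x j) ∂τ))) ∧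
    ((t < 0 ∧ (τ {α | 1 < α} = 0 ∨
        (∃ αstar : ℝ≥0∞, 1 < αstar ∧ τ {α | 1 < α ∧ α ≠ αstar} = 0 ∧ τ {1} = 0 ∧
          Integrable aRatio τ ∧ ∫ α, aRatio α ∂τ ≤ 1 / t))) →
      ConvexOn ℝ {x : Fin d → ℝ | (∀ i, 0 ≤ x i) ∧ x ≠ 0}
        (fun x => (∑ i, x i) *
          exp2 (t * ∫ α, renyi α (fun i => x i / ∑ j, x j) ∂τ))) :=
  measure_concavity_convexity_general τ hτ t d
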